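/- For every u ∈ [−1,1] with |u| ≤ u_x, the function λ ↦ 𝒫_u(x,b,λ) is differentiable at λ = 0 with derivative equal to f(u) = (h² + tξ'(u))/(b − d(0))² − u. -/

import Mathlib

open MeasureTheory Real Set

/-- Second derivative of `ξ`. -/
noncomputable def xi2 (ξ : ℝ → ℝ) : ℝ → ℝ := deriv (deriv ξ)

/-- `d(q) = ∫_q^1 ξ''(s) x(s) ds`. -/
noncomputable def dFun (ξ x : ℝ → ℝ) (q : ℝ) : ℝ := ∫ s in q..1, xi2 ξ s * x s

/-- `φ_u(q) = d(u) + ((1-t)/(1+t))(d(q) - d(u))`. -/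
noncomputable def phiFun (ξ x : ℝ → ℝ) (t u q : ℝ) : ℝ :=
  dFun ξ x u + (1 - t) / (1 + t) * (dFun ξ x q - dFun ξ x u)

/-- The functional `T_u(x,b,λ)` of Proposition 2.1. -/
noncomputable def TFun (ξ x : ℝ → ℝ) (t b u lam : ℝ) : ℝ :=
  let η : ℝ := if 0 ≤ u then 1 else -1
  (1 / 2) * Real.log (b ^ 2 / (b ^ 2 - lam ^ 2))
    + (1 + t) / 2 * (∫ s in (0:ℝ)..|u|, xi2 ξ s / (b - η * lam - dFun ξ x s))
    + (1 - t) / 2 * (∫ s in (0:ℝ)..|u|, xi2 ξ s / (b + η * lam - phiFun ξ x t |u| s))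
    + (1 / 2) * (∫ s in |u|..(1:ℝ), xi2 ξ s / (b - lam - dFun ξ x s))
    + (1 / 2) * (∫ s in |u|..(1:ℝ), xi2 ξ s / (b + lam - dFun ξ x s))
    - lam * u + b - 1 - Real.log b - ∫ q in (0:ℝ)..1, xi2 ξ q * x q

/-- The two-dimensional Guerra functional `𝒫_u(x,b,λ)`. -/
noncomputable def GuerraP (ξ x : ℝ → ℝ) (t h b u lam : ℝ) : ℝ :=
  if 0 ≤ u then TFun ξ x t b u lam + h ^ 2 / (b - lam - dFun ξ x 0)
  else TFun ξ x t b u lam + h ^ 2 / (b - lam - phiFun ξ x t |u| 0)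

/-- The Crisanti–Sommers functional `𝒫(x,b)`. -/
noncomputable def CSFun (ξ x : ℝ → ℝ) (h b : ℝ) : ℝ :=
  (1 / 2) * (h ^ 2 / (b - dFun ξ x 0)
    + (∫ q in (0:ℝ)..1, xi2 ξ q / (b - dFun ξ x q))
    + b - 1 - Real.log b - ∫ q in (0:ℝ)..1, xi2 ξ q * x q)


/-!
Since `x` vanishes on `[0, u_x)`, both `d` and `φ_{|u|}` equal `d(0)` on `[0, |u|]`, so the two
integrals over `[0, |u|]` are explicit, namely `ξ'(|u|) / (b ∓ ηλ - d(0))` (using `ξ'(0) = 0`,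
as `ξ` is even). Their `λ`-derivatives at `0` add up to `t η ξ'(|u|) / (b - d(0))²`, and
`η ξ'(|u|) = ξ'(u)` because `ξ'` is odd.
On `[|u|, 1]` the denominators `b ± λ - d(s)` stay away from `0` because `d` is nonincreasing and
`d(0) < b`, so the two remaining integrals can be differentiated under the integral sign; their
derivatives at `0` are opposite. The logarithm is even in `λ`, and the external field contributes
`h² / (b - d(0))²`.
-/

theorem deriv_neg_of_even {ξ : ℝ → ℝ} (hξ : ∀ s, ξ (-s) = ξ s) (y : ℝ) :
    deriv ξ (-y) = -deriv ξ y := by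
  have h := deriv_comp_neg ξ y
  rw [show (fun s => ξ (-s)) = ξ from funext hξ] at h
  rw [h, neg_neg]

theorem integral_xi2_div_sub_eq {ξ g : ℝ → ℝ} {a D : ℝ} (hξ_even : ∀ s, ξ (-s) = ξ s)
    (hξ : ContDiff ℝ 2 ξ) (ha : 0 ≤ a) (hg : ∀ s ∈ Icc 0 a, g s = D) (w : ℝ) :
    ∫ s in (0:ℝ)..a, xi2 ξ s / (w - g s) = deriv ξ a / (w - D) := by
  have hξ' : ContDiff ℝ 1 (deriv ξ) := hξ.iterate_deriv' 1 1
  have hFTC : ∫ s in (0:ℝ)..a, xi2 ξ s = deriv ξ a - deriv ξ 0 :=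
    intervalIntegral.integral_deriv_eq_sub (fun y _ => hξ'.differentiable one_ne_zero y)
      ((hξ'.continuous_deriv le_rfl).intervalIntegrable 0 a)
  have hξ'0 : deriv ξ 0 = 0 := by linarith [neg_zero (G := ℝ) ▸ deriv_neg_of_even hξ_even 0]
  rw [intervalIntegral.integral_congr (g := fun s => xi2 ξ s / (w - D))
      fun s hs => by rw [hg s (by rwa [uIcc_of_le ha] at hs)],
    intervalIntegral.integral_div, hFTC, hξ'0, sub_zero]

theorem hasDerivAt_log_div_sq_sub_sq {b : ℝ} (hb : b ≠ 0) :
    HasDerivAt (fun lam => log (b ^ 2 / (b ^ 2 - lam ^ 2))) 0 0 := by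
  have hb2 : b ^ 2 - 0 ^ 2 ≠ 0 := by simpa using hb
  have hq := (hasDerivAt_const (0:ℝ) (b ^ 2)).div
    ((hasDerivAt_const (0:ℝ) (b ^ 2)).sub (hasDerivAt_pow 2 (0:ℝ))) hb2
  simpa using hq.log (div_ne_zero (pow_ne_zero 2 hb) hb2)

theorem hasDerivAt_integral_div_sub {f g : ℝ → ℝ} {a b z : ℝ} (hab : a ≤ b)
    (hf : ContinuousOn f (Icc a b)) (hg : ContinuousOn g (Icc a b))
    (hgz : ∀ s ∈ Icc a b, g s < z) :
    HasDerivAt (fun w => ∫ s in a..b, f s / (w - g s))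
      (-∫ s in a..b, f s / (z - g s) ^ 2) z := by
  obtain ⟨s₀, hs₀, hmax⟩ := isCompact_Icc.exists_isMaxOn (nonempty_Icc.2 hab) hg
  obtain ⟨M, hM⟩ := isCompact_Icc.exists_bound_of_continuousOn hf
  set ε := (z - g s₀) / 2 with hε_def
  have hε : 0 < ε := by rw [hε_def]; linarith [hgz s₀ hs₀]
  -- `g ≤ z - 2ε` on `[a, b]`, so the denominators stay above `ε` near `z`
  have hgap : ∀ s ∈ Icc a b, ∀ w ∈ Metric.ball z ε, ε < w - g s := fun s hs w hw => by
    have := (abs_lt.1 (Real.dist_eq w z ▸ Metric.mem_ball.1 hw)).1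
    linarith [show g s ≤ g s₀ from hmax hs, hε_def]
  have hsub : uIoc a b ⊆ Icc a b := by rw [uIoc_of_le hab]; exact Ioc_subset_Icc_self
  have hcont : ∀ w ∈ Metric.ball z ε, ∀ n : ℕ,
      ContinuousOn (fun s => f s / (w - g s) ^ n) (Icc a b) := fun w hw n =>
    hf.div ((continuousOn_const.sub hg).pow n) fun s hs =>
      pow_ne_zero n (hε.trans (hgap s hs w hw)).ne'
  have hz : z ∈ Metric.ball z ε := Metric.mem_ball_self hε
  have key := intervalIntegral.hasDerivAt_integral_of_dominated_loc_of_deriv_le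
    (F := fun w s => f s / (w - g s)) (F' := fun w s => -(f s / (w - g s) ^ 2))
    (μ := volume) (bound := fun _ => M / ε ^ 2) (Metric.ball_mem_nhds z hε)
    (Filter.eventually_of_mem (Metric.ball_mem_nhds z hε) fun w hw => by
      simpa using ((hcont w hw 1).mono hsub).aestronglyMeasurable measurableSet_uIoc)
    (by simpa using ((hcont z hz 1).mono (uIcc_of_le hab).subset).intervalIntegrable)
    (((hcont z hz 2).neg.mono hsub).aestronglyMeasurable measurableSet_uIoc)
    (Filter.Eventually.of_forall fun s hs w hw => by
      have hgap' := hgap s (hsub hs) w hw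
      rw [norm_neg, norm_div, norm_pow, Real.norm_of_nonneg (hε.trans hgap').le]
      exact div_le_div₀ ((norm_nonneg _).trans (hM s (hsub hs))) (hM s (hsub hs)) (by positivity)
        (pow_le_pow_left₀ hε.le hgap'.le 2))
    intervalIntegrable_const
    (Filter.Eventually.of_forall fun s hs w hw => by
      have hne : w - g s ≠ 0 := (hε.trans (hgap s (hsub hs) w hw)).ne'
      exact ((hasDerivAt_const w (f s)).div ((hasDerivAt_id' w).sub_const (g s)) hne).congr_deriv
        (by ring))
  simpa only [intervalIntegral.integral_neg] using key.2

theorem hasDerivAt_integral_div_sub_sub {f g : ℝ → ℝ} {a b c : ℝ} (hab : a ≤ b)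
    (hf : ContinuousOn f (Icc a b)) (hg : ContinuousOn g (Icc a b))
    (hgc : ∀ s ∈ Icc a b, g s < c) :
    HasDerivAt (fun lam => ∫ s in a..b, f s / (c - lam - g s))
      (∫ s in a..b, f s / (c - g s) ^ 2) 0 := by
  simpa using (hasDerivAt_integral_div_sub hab hf hg (z := c - 0)
    (by simpa using hgc)).comp_const_sub c 0

theorem hasDerivAt_integral_div_add_sub {f g : ℝ → ℝ} {a b c : ℝ} (hab : a ≤ b)
    (hf : ContinuousOn f (Icc a b)) (hg : ContinuousOn g (Icc a b))
    (hgc : ∀ s ∈ Icc a b, g s < c) :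
    HasDerivAt (fun lam => ∫ s in a..b, f s / (c + lam - g s))
      (-∫ s in a..b, f s / (c - g s) ^ 2) 0 := by
  simpa using (hasDerivAt_integral_div_sub hab hf hg (z := c + 0)
    (by simpa using hgc)).comp_const_add c 0

section

variable {ξ x : ℝ → ℝ}

theorem intervalIntegrable_xi2_mul (hξ : Continuous (xi2 ξ)) (hx : MonotoneOn x (Icc 0 1))
    {p q : ℝ} (hp : p ∈ Icc (0:ℝ) 1) (hq : q ∈ Icc (0:ℝ) 1) :
    IntervalIntegrable (fun s => xi2 ξ s * x s) volume p q :=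
  (hx.mono (uIcc_subset_Icc hp hq)).intervalIntegrable.continuousOn_mul hξ.continuousOn

theorem continuousOn_dFun (hξ : Continuous (xi2 ξ)) (hx : MonotoneOn x (Icc 0 1)) :
    ContinuousOn (dFun ξ x) (Icc 0 1) := by
  have hint : IntegrableOn (fun s => xi2 ξ s * x s) (uIcc 0 1) := by
    rw [uIcc_of_le zero_le_one, ← intervalIntegrable_iff_integrableOn_Icc_of_le zero_le_one]
    exact intervalIntegrable_xi2_mul hξ hx (left_mem_Icc.2 zero_le_one)
      (right_mem_Icc.2 zero_le_one)
  rw [← uIcc_of_le zero_le_one]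
  exact intervalIntegral.continuousOn_primitive_interval_left hint

theorem dFun_sub_dFun (hξ : Continuous (xi2 ξ)) (hx : MonotoneOn x (Icc 0 1))
    {p q : ℝ} (hp : p ∈ Icc (0:ℝ) 1) (hq : q ∈ Icc (0:ℝ) 1) :
    dFun ξ x p - dFun ξ x q = ∫ s in p..q, xi2 ξ s * x s := by
  rw [dFun, dFun, ← intervalIntegral.integral_add_adjacent_intervals
    (intervalIntegrable_xi2_mul hξ hx hp hq)
    (intervalIntegrable_xi2_mul hξ hx hq (right_mem_Icc.2 zero_le_one)), add_sub_cancel_right]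

theorem antitoneOn_dFun (hξ : Continuous (xi2 ξ)) (hx : MonotoneOn x (Icc 0 1))
    (hξ_nonneg : ∀ s ∈ Ioc (0:ℝ) 1, 0 ≤ xi2 ξ s)
    (hx_nonneg : ∀ s ∈ Ioc (0:ℝ) 1, 0 ≤ x s) :
    AntitoneOn (dFun ξ x) (Icc 0 1) := by
  intro p hp q hq hpq
  have hI : 0 ≤ ∫ s in p..q, xi2 ξ s * x s := by
    rw [intervalIntegral.integral_of_le hpq]
    refine setIntegral_nonneg measurableSet_Ioc fun s hs => ?_
    have hs' : s ∈ Ioc (0:ℝ) 1 := ⟨hp.1.trans_lt hs.1, hs.2.trans hq.2⟩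
    exact mul_nonneg (hξ_nonneg s hs') (hx_nonneg s hs')
  linarith [dFun_sub_dFun hξ hx hp hq]

theorem dFun_eq_dFun_zero {ux s : ℝ} (hξ : Continuous (xi2 ξ))
    (hx : MonotoneOn x (Icc 0 1)) (hux : ∀ q ∈ Ico (0:ℝ) ux, x q = 0)
    (hs : s ∈ Icc (0:ℝ) 1) (hsu : s ≤ ux) :
    dFun ξ x s = dFun ξ x 0 := by
  have hI : ∫ r in (0:ℝ)..s, xi2 ξ r * x r = 0 := by
    rw [intervalIntegral.integral_of_le hs.1, integral_Ioc_eq_integral_Ioo]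
    exact setIntegral_eq_zero_of_forall_eq_zero fun r hr => by
      rw [hux r ⟨hr.1.le, hr.2.trans_le hsu⟩, mul_zero]
  linarith [dFun_sub_dFun hξ hx (left_mem_Icc.2 zero_le_one) hs]

end

theorem hasDerivAt_TFun_zero {ξ x : ℝ → ℝ} {t b u : ℝ} (hξ_even : ∀ s, ξ (-s) = ξ s)
    (hξ : ContDiff ℝ 2 ξ) (hu : |u| ≤ 1) (hd : ContinuousOn (dFun ξ x) (Icc 0 1))
    (hflat : ∀ s ∈ Icc 0 |u|, dFun ξ x s = dFun ξ x 0)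
    (hlt : ∀ s ∈ Icc |u| 1, dFun ξ x s < b) (hb : b ≠ 0) :
    HasDerivAt (TFun ξ x t b u) (t * deriv ξ u / (b - dFun ξ x 0) ^ 2 - u) 0 := by
  have hu0 : 0 ≤ |u| := abs_nonneg u
  have hφ : ∀ s ∈ Icc 0 |u|, phiFun ξ x t |u| s = dFun ξ x 0 := fun s hs => by
    simp [phiFun, hflat s hs, hflat |u| ⟨hu0, le_rfl⟩]
  have hD : b - dFun ξ x 0 ≠ 0 :=
    (sub_pos.2 (hflat |u| ⟨hu0, le_rfl⟩ ▸ hlt |u| ⟨le_rfl, hu⟩)).ne'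
  have hξ₂ : ContinuousOn (xi2 ξ) (Icc |u| 1) :=
    ((hξ.iterate_deriv' 1 1).continuous_deriv le_rfl).continuousOn
  have hd' : ContinuousOn (dFun ξ x) (Icc |u| 1) := hd.mono (Icc_subset_Icc hu0 le_rfl)
  set η : ℝ := if 0 ≤ u then 1 else -1 with hη
  have hηu : η * deriv ξ |u| = deriv ξ u := by
    rcases le_or_gt 0 u with h0 | h0
    · rw [hη, if_pos h0, abs_of_nonneg h0, one_mul]
    · rw [hη, if_neg h0.not_ge, abs_of_neg h0, deriv_neg_of_even hξ_even, neg_one_mul, neg_neg]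
  have hB := (hasDerivAt_const (0:ℝ) (deriv ξ |u|)).div
    (((hasDerivAt_id' 0).const_mul η).const_sub b |>.sub_const (dFun ξ x 0))
    (by simpa using hD)
  have hC := (hasDerivAt_const (0:ℝ) (deriv ξ |u|)).div
    (((hasDerivAt_id' 0).const_mul η).const_add b |>.sub_const (dFun ξ x 0))
    (by simpa using hD)
  have hE := hasDerivAt_integral_div_sub_sub hu hξ₂ hd' hlt
  have hF := hasDerivAt_integral_div_add_sub hu hξ₂ hd' hlt
  unfold TFun
  simp only [integral_xi2_div_sub_eq hξ_even hξ hu0 hflat,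
    integral_xi2_div_sub_eq hξ_even hξ hu0 hφ]
  have hsum := (((((hasDerivAt_log_div_sq_sub_sq hb).const_mul (1 / 2)).add
    (hB.const_mul ((1 + t) / 2))).add (hC.const_mul ((1 - t) / 2))).add
    (hE.const_mul (1 / 2))).add (hF.const_mul (1 / 2))
  refine ((hsum.sub (hasDerivAt_mul_const u)).add_const b |>.sub_const 1 |>.sub_const (log b)
    |>.sub_const (∫ q in (0:ℝ)..1, xi2 ξ q * x q)).congr_deriv ?_
  rw [← hηu]
  simp only [mul_zero, sub_zero, add_zero]
  ring

theorem guerraP_eq_TFun_add {ξ x : ℝ → ℝ} {t h b u : ℝ}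
    (hφ0 : phiFun ξ x t |u| 0 = dFun ξ x 0) (lam : ℝ) :
    GuerraP ξ x t h b u lam = TFun ξ x t b u lam + h ^ 2 / (b - lam - dFun ξ x 0) := by
  unfold GuerraP
  split_ifs <;> simp only [hφ0]

theorem guerra_hasDerivAt_zero_general
    (ξ x : ℝ → ℝ) (h t b ux : ℝ)
    (hξ_even : ∀ s, ξ (-s) = ξ s)
    (hξ_smooth : ContDiff ℝ 3 ξ)
    (hξ'' : ∀ s ∈ Set.Ioc (0:ℝ) 1, 0 < xi2 ξ s)
    (hx_mono : MonotoneOn x (Set.Icc 0 1))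
    (hx_mem : ∀ q ∈ Set.Icc (0:ℝ) 1, x q ∈ Set.Icc (0:ℝ) 1)
    (hux_lower : ∀ q ∈ Set.Ico (0:ℝ) ux, x q = 0)
    (hb : max 1 (∫ s in (0:ℝ)..1, xi2 ξ s * x s) < b) :
    ∀ u ∈ Set.Icc (-1:ℝ) 1, |u| ≤ ux →
      HasDerivAt (fun lam => GuerraP ξ x t h b u lam)
        ((h ^ 2 + t * deriv ξ u) / (b - dFun ξ x 0) ^ 2 - u) 0 := by
  intro u hu huux
  have hξ : ContDiff ℝ 2 ξ := hξ_smooth.of_le (by norm_num)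
  have hξc : Continuous (xi2 ξ) := (hξ.iterate_deriv' 1 1).continuous_deriv le_rfl
  have hu1 : |u| ≤ 1 := abs_le.2 hu
  have hb0 : b ≠ 0 := by linarith [le_max_left 1 (∫ s in (0:ℝ)..1, xi2 ξ s * x s)]
  have hd0 : dFun ξ x 0 < b := (le_max_right _ _).trans_lt hb
  have hflat : ∀ s ∈ Icc 0 |u|, dFun ξ x s = dFun ξ x 0 := fun s hs =>
    dFun_eq_dFun_zero hξc hx_mono hux_lower ⟨hs.1, hs.2.trans hu1⟩ (hs.2.trans huux)
  have hlt : ∀ s ∈ Icc |u| 1, dFun ξ x s < b := fun s hs =>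
    (antitoneOn_dFun hξc hx_mono (fun s hs => (hξ'' s hs).le)
      (fun s hs => (hx_mem s (Ioc_subset_Icc_self hs)).1) (left_mem_Icc.2 zero_le_one)
      ⟨(abs_nonneg u).trans hs.1, hs.2⟩ ((abs_nonneg u).trans hs.1)).trans_lt hd0
  have hT := hasDerivAt_TFun_zero (t := t) hξ_even hξ hu1 (continuousOn_dFun hξc hx_mono)
    hflat hlt hb0
  have hH := (hasDerivAt_const (0:ℝ) (h ^ 2)).div
    ((hasDerivAt_id' 0).const_sub b |>.sub_const (dFun ξ x 0))
    (by simpa using (sub_pos.2 hd0).ne')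
  have hφ0 : phiFun ξ x t |u| 0 = dFun ξ x 0 := by
    simp [phiFun, hflat |u| ⟨abs_nonneg u, le_rfl⟩]
  refine ((hT.add hH).congr_of_eventuallyEq
    (.of_forall (guerraP_eq_TFun_add hφ0))).congr_deriv ?_
  simp only [sub_zero]
  ring

/-- For `|u| ≤ u_x`, the map `λ ↦ 𝒫_u(x,b,λ)` is differentiable at `λ = 0` with
derivative `f(u) = (h² + tξ'(u))/(b - d(0))² - u`. -/
theorem guerra_hasDerivAt_zero
    (ξ x : ℝ → ℝ) (h t b ux : ℝ)
    (hξ_even : ∀ s, ξ (-s) = ξ s)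
    (hξ_smooth : ContDiff ℝ 3 ξ)
    (hξ'' : ∀ s ∈ Set.Ioc (0:ℝ) 1, 0 < xi2 ξ s)
    (hξ''' : ∀ s ∈ Set.Icc (0:ℝ) 1, 0 ≤ deriv (xi2 ξ) s)
    (hx_mono : MonotoneOn x (Set.Icc 0 1))
    (hx_mem : ∀ q ∈ Set.Icc (0:ℝ) 1, x q ∈ Set.Icc (0:ℝ) 1)
    (hx_rc : ∀ q ∈ Set.Ico (0:ℝ) 1, ContinuousWithinAt x (Set.Ici q) q)
    (hx_one : x 1 = 1)
    (hux_mem : ux ∈ Set.Icc (0:ℝ) 1)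
    (hux_lower : ∀ q ∈ Set.Ico (0:ℝ) ux, x q = 0)
    (hux_upper : ∀ q ∈ Set.Ioc ux 1, 0 < x q)
    (ht : t ∈ Set.Ioo (0:ℝ) 1)
    (hb : max 1 (∫ s in (0:ℝ)..1, xi2 ξ s * x s) < b) :
    ∀ u ∈ Set.Icc (-1:ℝ) 1, |u| ≤ ux →
      HasDerivAt (fun lam => GuerraP ξ x t h b u lam)
        ((h ^ 2 + t * deriv ξ u) / (b - dFun ξ x 0) ^ 2 - u) 0 :=
  guerra_hasDerivAt_zero_general ξ x h t b ux hξ_even hξ_smooth hξ'' hx_mono hx_mem hux_lower hb
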